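/- Let f : ℝ → ℝ be infinitely differentiable and z ∈ ℝ. For Δx > 0 set f_m = f(z + (2m−1)Δx/2) for m = −2,…,2 and define the undivided differences L_{1,0}(Δx) = f₋₂ − 3f₋₁ + 2f₀ and L_{1,1}(Δx) = −f₀ + f₁. Then, as Δx → 0⁺: L_{1,0}(Δx) − [ Δx·f'(z) − (23/24)·Δx³·f'''(z) + Δx⁴·f⁗(z) ] = O(Δx⁵), and L_{1,1}(Δx) − [ Δx·f'(z) + (1/24)·Δx³·f'''(z) ] = O(Δx⁵); moreover L_{1,2}(Δx) := (1−2)f₀ + (2·2−3)f₁ + (2−2)f₂ coincides with L_{1,1}(Δx). -/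

import Mathlib

open Filter Asymptotics Topology Set




/-- Grid value `f_m = f(z + (2m-1)Δx/2)` at the node `x_{j+m}`, where `z` is the
cell interface `x_{j+1/2}`. -/
noncomputable def gridVal (f : ℝ → ℝ) (z Δx : ℝ) (m : ℤ) : ℝ :=
  f (z + (2 * (m : ℝ) - 1) * Δx / 2)

/-- First-order generalized undivided difference `L_{1,0}f`. -/
noncomputable def L10 (f : ℝ → ℝ) (z Δx : ℝ) : ℝ :=
  gridVal f z Δx (-2) - 3 * gridVal f z Δx (-1) + 2 * gridVal f z Δx 0

/-- First-order generalized undivided difference `L_{1,1}f`. -/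
noncomputable def L11 (f : ℝ → ℝ) (z Δx : ℝ) : ℝ :=
  -gridVal f z Δx 0 + gridVal f z Δx 1

lemma iterWithin_eq {f : ℝ → ℝ} (hf : ContDiff ℝ (⊤ : ℕ∞) f) {s : Set ℝ} (hs : UniqueDiffOn ℝ s)
    {x : ℝ} (hx : x ∈ s) (k : ℕ) :
    iteratedDerivWithin k f s x = iteratedDeriv k f x := by
  rw [iteratedDerivWithin_eq_iteratedFDerivWithin, iteratedDeriv_eq_iteratedFDeriv]
  have hk : ContDiff ℝ (k : ℕ∞) f := hf.of_le (by exact_mod_cast le_top)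
  have h1 : HasFTaylorSeriesUpToOn (k : ℕ∞) f (ftaylorSeries ℝ f) s :=
    (contDiff_iff_ftaylorSeries.mp hk).hasFTaylorSeriesUpToOn s
  have := h1.eq_iteratedFDerivWithin_of_uniqueDiffOn (m := k) le_rfl hs hx
  rw [← this]
  rfl

lemma peano {h : ℝ → ℝ} (hh : ContDiff ℝ (⊤ : ℕ∞) h) :
    (fun x : ℝ => h x - ∑ k ∈ Finset.range 5,
        ((k.factorial : ℝ)⁻¹ * x ^ k) * iteratedDeriv k h 0)
      =O[𝓝[>] (0 : ℝ)] fun x => x ^ 5 := by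
  have hc : ContDiffOn ℝ ((4 : ℕ) + 1) h (Icc (0:ℝ) 1) := (hh.of_le (WithTop.coe_le_coe.mpr le_top)).contDiffOn
  obtain ⟨C, hC⟩ := exists_taylor_mean_remainder_bound (n := 4) zero_le_one hc
  rw [isBigO_iff]
  refine ⟨C, ?_⟩
  filter_upwards [Ioc_mem_nhdsGT (zero_lt_one)] with x hx
  have hx' : x ∈ Icc (0:ℝ) 1 := ⟨hx.1.le, hx.2⟩
  have hT : taylorWithinEval h 4 (Icc (0:ℝ) 1) 0 x
      = ∑ k ∈ Finset.range 5, ((k.factorial : ℝ)⁻¹ * x ^ k) * iteratedDeriv k h 0 := by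
    rw [taylor_within_apply]
    refine Finset.sum_congr rfl fun k _ => ?_
    rw [iterWithin_eq hh (uniqueDiffOn_Icc zero_lt_one) (left_mem_Icc.mpr zero_le_one) k]
    simp [smul_eq_mul]
  have := hC x hx'
  rw [hT] at this
  calc ‖h x - ∑ k ∈ Finset.range 5, ((k.factorial : ℝ)⁻¹ * x ^ k) * iteratedDeriv k h 0‖
      ≤ C * (x - 0) ^ (4 + 1) := this
    _ = C * ‖x ^ 5‖ := by
        rw [sub_zero, Real.norm_eq_abs, abs_of_pos (pow_pos hx.1 5)]

lemma node {f : ℝ → ℝ} (hf : ContDiff ℝ (⊤ : ℕ∞) f) (z c : ℝ) :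
    (fun x : ℝ => f (z + c * x) - ∑ k ∈ Finset.range 5,
        ((k.factorial : ℝ)⁻¹ * x ^ k) * (c ^ k * iteratedDeriv k f z))
      =O[𝓝[>] (0 : ℝ)] fun x => x ^ 5 := by
  have hg : ContDiff ℝ (⊤ : ℕ∞) (fun x : ℝ => f (z + c * x)) :=
    hf.comp (contDiff_const.add (contDiff_const.mul contDiff_id))
  have hder : ∀ k : ℕ, iteratedDeriv k (fun x : ℝ => f (z + c * x)) 0
      = c ^ k * iteratedDeriv k f z := by
    intro k
    have h1 : iteratedDeriv k (fun x : ℝ => (fun y => f (z + y)) (c * x))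
        = fun x => c ^ k * iteratedDeriv k (fun y => f (z + y)) (c * x) :=
      iteratedDeriv_comp_const_mul
        ((hf.comp (contDiff_const.add contDiff_id)).of_le (by exact_mod_cast le_top)) c
    have h2 := iteratedDeriv_comp_const_add k f z
    simp only [h2] at h1
    have := congrFun h1 0
    simpa using this
  have := peano hg
  simp only [hder] at this
  exact this
/-- Taylor expansions of the first-order generalized undivided differences `L_{1,k}f`
of the WENO-NS scheme as `Δx → 0⁺`, together with the identity `L_{1,2}f = L_{1,1}f`. -/
theorem L1_expansion (f : ℝ → ℝ) (hf : ContDiff ℝ (⊤ : ℕ∞) f) (z : ℝ) :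
    ((fun Δx : ℝ => L10 f z Δx -
        (Δx * deriv f z - (23 / 24) * Δx ^ 3 * iteratedDeriv 3 f z
          + Δx ^ 4 * iteratedDeriv 4 f z))
        =O[𝓝[>] (0 : ℝ)] fun Δx => Δx ^ 5) ∧
    ((fun Δx : ℝ => L11 f z Δx -
        (Δx * deriv f z + (1 / 24) * Δx ^ 3 * iteratedDeriv 3 f z))
        =O[𝓝[>] (0 : ℝ)] fun Δx => Δx ^ 5) ∧
    (∀ Δx : ℝ,
      (1 - 2) * gridVal f z Δx 0 + (2 * 2 - 3) * gridVal f z Δx 1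
        + (2 - 2) * gridVal f z Δx 2 = L11 f z Δx) := by
  have hA := node hf z (-(5/2))
  have hB := node hf z (-(3/2))
  have hC := node hf z (-(1/2))
  have hD := node hf z (1/2)
  have hderiv : deriv f z = iteratedDeriv 1 f z := by rw [iteratedDeriv_one]
  refine ⟨?_, ?_, ?_⟩
  · have comb := (hA.sub (hB.const_mul_left 3)).add (hC.const_mul_left 2)
    have key : (fun Δx : ℝ => L10 f z Δx -
        (Δx * deriv f z - (23 / 24) * Δx ^ 3 * iteratedDeriv 3 f z
          + Δx ^ 4 * iteratedDeriv 4 f z)) =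
        fun x : ℝ =>
          (f (z + -(5/2) * x) - ∑ k ∈ Finset.range 5,
              ((k.factorial : ℝ)⁻¹ * x ^ k) * ((-(5/2):ℝ) ^ k * iteratedDeriv k f z))
          - 3 * (f (z + -(3/2) * x) - ∑ k ∈ Finset.range 5,
              ((k.factorial : ℝ)⁻¹ * x ^ k) * ((-(3/2):ℝ) ^ k * iteratedDeriv k f z))
          + 2 * (f (z + -(1/2) * x) - ∑ k ∈ Finset.range 5,
              ((k.factorial : ℝ)⁻¹ * x ^ k) * ((-(1/2):ℝ) ^ k * iteratedDeriv k f z)) := by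
      funext x
      have e1 : z + (2 * ((-2 : ℤ) : ℝ) - 1) * x / 2 = z + -(5/2) * x := by push_cast; ring
      have e2 : z + (2 * ((-1 : ℤ) : ℝ) - 1) * x / 2 = z + -(3/2) * x := by push_cast; ring
      have e3 : z + (2 * ((0 : ℤ) : ℝ) - 1) * x / 2 = z + -(1/2) * x := by push_cast; ring
      simp only [L10, gridVal, e1, e2, e3, hderiv, Finset.sum_range_succ,
        Finset.sum_range_zero]
      norm_num [Nat.factorial]
      ring
    rw [key]; exact comb
  · have comb := hD.sub hC
    have key : (fun Δx : ℝ => L11 f z Δx -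
        (Δx * deriv f z + (1 / 24) * Δx ^ 3 * iteratedDeriv 3 f z)) =
        fun x : ℝ =>
          (f (z + (1/2) * x) - ∑ k ∈ Finset.range 5,
              ((k.factorial : ℝ)⁻¹ * x ^ k) * (((1/2):ℝ) ^ k * iteratedDeriv k f z))
          - (f (z + -(1/2) * x) - ∑ k ∈ Finset.range 5,
              ((k.factorial : ℝ)⁻¹ * x ^ k) * ((-(1/2):ℝ) ^ k * iteratedDeriv k f z)) := by
      funext x
      have e3 : z + (2 * ((0 : ℤ) : ℝ) - 1) * x / 2 = z + -(1/2) * x := by push_cast; ring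
      have e4 : z + (2 * ((1 : ℤ) : ℝ) - 1) * x / 2 = z + (1/2) * x := by push_cast; ring
      simp only [L11, gridVal, e3, e4, hderiv, Finset.sum_range_succ, Finset.sum_range_zero]
      norm_num [Nat.factorial]
      ring
    rw [key]; exact comb
  · intro Δx
    simp only [L11]
    ring
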